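/- Let C be a small category with a terminal object 1 and let F be a presheaf of sets on C. Define G(X) as the image of the canonical map F(X) → Set(Hom_C(1,X), F(1)). Then G is a concrete presheaf, the quotient map q : F → G is a morphism of presheaves, and q is universal among morphisms from F to concrete presheaves: every morphism F → H with H concrete factors uniquely through q. -/

import Mathlib

/-! The quotient map `q : F ⟶ G` is surjective in each component, hence an epimorphism, which
gives uniqueness of factorizations. For existence, a morphism `η : F ⟶ H` into a concrete `H`
is constant on the fibres of `q`: if `s` and `t` have the same restrictions to all points
`p : T ⟶ X`, then so do `η s` and `η t` by naturality, and concreteness of `H` gives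
`η s = η t`. -/

open CategoryTheory CategoryTheory.Limits Opposite

/-- A presheaf of sets `H` on a category with terminal object `T` is *concrete* if for
every object `X` the canonical map `H(X) → Set(Hom(T, X), H(T))` is injective. -/
def IsConcretePresheaf {C : Type} [SmallCategory C] (T : C) (H : Cᵒᵖ ⥤ Type) : Prop :=
  ∀ X : C, Function.Injective (fun (s : H.obj (op X)) => fun (p : T ⟶ X) => H.map p.op s)

variable {C : Type} [SmallCategory C]

/-- The concretization `G` of a presheaf `F`: `G(X)` is the image of the canonical map
`F(X) → Set(Hom(T, X), F(T))`. -/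
def concretization (T : C) (F : Cᵒᵖ ⥤ Type) : Cᵒᵖ ⥤ Type where
  obj X := { φ : (T ⟶ X.unop) → F.obj (op T) // ∃ s : F.obj X, ∀ p, φ p = F.map p.op s }
  map {X Y} f := TypeCat.ofHom fun φ => ⟨fun p => φ.1 (p ≫ f.unop), by
    obtain ⟨s, hs⟩ := φ.2
    refine ⟨F.map f s, fun p => ?_⟩
    show φ.1 (p ≫ f.unop) = _
    rw [hs (p ≫ f.unop)]
    have h1 : (p ≫ f.unop).op = f ≫ p.op := rfl
    rw [h1, FunctorToTypes.map_comp_apply]⟩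
  map_id X := by
    ext φ x
    simp
  map_comp {X Y Z} f g := by
    ext φ x
    simp

namespace concretization

variable (T : C) (F : Cᵒᵖ ⥤ Type)

def toConcretization : F ⟶ concretization T F where
  app X := TypeCat.ofHom fun s => ⟨fun p => F.map p.op s, s, fun _ => rfl⟩
  naturality X Y f := by
    ext s
    exact Subtype.ext (funext fun p => (Functor.map_comp_apply F f p.op s).symm)

@[simp]
lemma toConcretization_app_val (X : Cᵒᵖ) (s : F.obj X) :
    (toConcretization T F |>.app X s).1 = fun p : T ⟶ X.unop => F.map p.op s :=
  rfl

lemma toConcretization_app_choose {X : Cᵒᵖ} (φ : (concretization T F).obj X) :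
    (toConcretization T F).app X φ.2.choose = φ :=
  Subtype.ext (funext fun p => (φ.2.choose_spec p).symm)

lemma toConcretization_app_surjective (X : Cᵒᵖ) :
    Function.Surjective (toConcretization T F |>.app X) := fun φ =>
  ⟨φ.2.choose, toConcretization_app_choose T F φ⟩

instance : Epi (toConcretization T F) :=
  have := fun X => (epi_iff_surjective _).2 (toConcretization_app_surjective T F X)
  NatTrans.epi_of_epi_app _

lemma isConcretePresheaf : IsConcretePresheaf T (concretization T F) := by
  intro X φ ψ h
  -- `φ` is recovered from its restrictions along the points `p` by evaluating them at `𝟙 T`.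
  refine Subtype.ext (funext fun p => ?_)
  have hp : φ.1 (𝟙 T ≫ p) = ψ.1 (𝟙 T ≫ p) :=
    congrArg (fun χ : (concretization T F).obj (op T) => χ.1 (𝟙 T)) (congrFun h p)
  simpa using hp

variable {T F} {H : Cᵒᵖ ⥤ Type}

lemma app_eq_of_toConcretization_app_eq (hH : IsConcretePresheaf T H) (η : F ⟶ H) {X : Cᵒᵖ}
    {s t : F.obj X} (hst : (toConcretization T F).app X s = (toConcretization T F).app X t) :
    η.app X s = η.app X t := by
  refine hH X.unop (funext fun p => ?_)
  simp only [← NatTrans.naturality_apply]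
  exact congrArg (η.app (op T)) (congrFun (congrArg Subtype.val hst) p)

noncomputable def lift (hH : IsConcretePresheaf T H) (η : F ⟶ H) :
    concretization T F ⟶ H where
  app X := TypeCat.ofHom fun φ => η.app X φ.2.choose
  naturality X Y f := by
    ext φ
    change η.app Y _ = H.map f (η.app X _)
    rw [← NatTrans.naturality_apply]
    apply app_eq_of_toConcretization_app_eq hH η
    rw [toConcretization_app_choose, NatTrans.naturality_apply, toConcretization_app_choose]
    rfl

lemma toConcretization_comp_lift (hH : IsConcretePresheaf T H) (η : F ⟶ H) :
    toConcretization T F ≫ lift hH η = η := by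
  ext X s
  exact app_eq_of_toConcretization_app_eq hH η (toConcretization_app_choose T F _)

end concretization

open concretization in
theorem concretization_is_reflection_general (T : C) (F : Cᵒᵖ ⥤ Type) :
    IsConcretePresheaf T (concretization T F) ∧
    ∃ q : F ⟶ concretization T F,
      (∀ (X : Cᵒᵖ) (s : F.obj X), (q.app X s).1 = fun p : T ⟶ X.unop => F.map p.op s) ∧
      ∀ (H : Cᵒᵖ ⥤ Type), IsConcretePresheaf T H →
        ∀ η : F ⟶ H, ∃! η' : concretization T F ⟶ H, q ≫ η' = η :=
  ⟨isConcretePresheaf T F, toConcretization T F, toConcretization_app_val T F,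
    fun _ hH η => ⟨concretization.lift hH η, toConcretization_comp_lift hH η,
      fun _ h => (cancel_epi (toConcretization T F)).1
        (h.trans (toConcretization_comp_lift hH η).symm)⟩⟩

/-- Let `C` be a small category with a terminal object `T` and `F` a
presheaf of sets on `C`.  The concretization `G` of `F` (with `G(X)` the image of
`F(X) → Set(Hom(T,X), F(T))`) is a concrete presheaf, the quotient maps
`F(X) → G(X)` assemble into a morphism of presheaves `q : F ⟶ G`, and `q` is universal
among morphisms from `F` to concrete presheaves: every morphism `F ⟶ H` with `H` concrete
factors uniquely through `q`. -/
theorem concretization_is_reflection (T : C) (hT : IsTerminal T) (F : Cᵒᵖ ⥤ Type) :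
    IsConcretePresheaf T (concretization T F) ∧
    ∃ q : F ⟶ concretization T F,
      (∀ (X : Cᵒᵖ) (s : F.obj X), (q.app X s).1 = fun p : T ⟶ X.unop => F.map p.op s) ∧
      ∀ (H : Cᵒᵖ ⥤ Type), IsConcretePresheaf T H →
        ∀ η : F ⟶ H, ∃! η' : concretization T F ⟶ H, q ≫ η' = η :=
  concretization_is_reflection_general T F
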